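/- If C = C₁ ⊕_r C₂ for some r ≥ 1, then with J = I₁∖I₂ and J̄ = I₂∖I₁ we have dim(C|_J) + dim(C|_{J̄}) − dim(C) = r, and moreover |J| ≥ r and |J̄| ≥ r. -/

import Mathlib

open Module

/-- The submodule of functions in `α → F` vanishing on `s`. -/
def vanishOn (F : Type*) [Field F] {α : Type*} (s : Set α) : Submodule F (α → F) where
  carrier := {x | ∀ a ∈ s, x a = 0}
  add_mem' := by
    intro x y hx hy a ha
    show x a + y a = 0
    rw [hx a ha, hy a ha, add_zero]
  zero_mem' := fun a _ => rfl
  smul_mem' := by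
    intro c x hx a ha
    show c • x a = 0
    rw [hx a ha, smul_zero]

variable (F : Type*) [Field F] (J K Jb : Type*)

/-- The `⋆` operation: indices of the first code are `J ⊕ K`, of the second `K ⊕ Jb`,
where `K` plays the role of the common index set `I₁ ∩ I₂`.  On `J` the result agrees with
`x`, on `Jb` with `y`, and on the common part `K` it is `x − y`. -/
noncomputable def starMap :
    ((J ⊕ K → F) × (K ⊕ Jb → F)) →ₗ[F] (J ⊕ K ⊕ Jb → F) where
  toFun p := Sum.elim (fun j => p.1 (Sum.inl j))
    (Sum.elim (fun k => p.1 (Sum.inr k) - p.2 (Sum.inl k)) (fun j => p.2 (Sum.inr j)))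
  map_add' p q := by
    funext i
    rcases i with j | k | j <;> simp <;> ring
  map_smul' c p := by
    funext i
    rcases i with j | k | j <;> simp <;> ring

variable {F J K Jb}

/-- The code `C₁ ⋆ C₂ = {x ⋆ y : x ∈ C₁, y ∈ C₂}`. -/
noncomputable def starCode (C₁ : Submodule F (J ⊕ K → F)) (C₂ : Submodule F (K ⊕ Jb → F)) :
    Submodule F (J ⊕ K ⊕ Jb → F) :=
  (C₁.prod C₂).map (starMap F J K Jb)

/-- The projection `C₁^{(p)} = C₁|_{I₁ ∩ I₂}` of the first code onto the common part `K`. -/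
noncomputable def projK₁ (C₁ : Submodule F (J ⊕ K → F)) : Submodule F (K → F) :=
  C₁.map (LinearMap.funLeft F F (Sum.inr : K → J ⊕ K))

/-- The projection `C₂^{(p)} = C₂|_{I₁ ∩ I₂}` of the second code onto the common part `K`. -/
noncomputable def projK₂ (C₂ : Submodule F (K ⊕ Jb → F)) : Submodule F (K → F) :=
  C₂.map (LinearMap.funLeft F F (Sum.inl : K → K ⊕ Jb))

/-- The cross-section `C₁^{(s)} = (C₁)_{I₁ ∩ I₂}` on the common part `K`. -/
noncomputable def crossK₁ (C₁ : Submodule F (J ⊕ K → F)) : Submodule F (K → F) :=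
  (C₁ ⊓ vanishOn F (Set.range (Sum.inl : J → J ⊕ K))).map
    (LinearMap.funLeft F F (Sum.inr : K → J ⊕ K))

/-- The cross-section `C₂^{(s)} = (C₂)_{I₁ ∩ I₂}` on the common part `K`. -/
noncomputable def crossK₂ (C₂ : Submodule F (K ⊕ Jb → F)) : Submodule F (K → F) :=
  (C₂ ⊓ vanishOn F (Set.range (Sum.inr : Jb → K ⊕ Jb))).map
    (LinearMap.funLeft F F (Sum.inl : K → K ⊕ Jb))

/-- `S(C₁, C₂)`: the cross-section of `C₁ ⋆ C₂` on the symmetric difference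
`I₁ Δ I₂ = J ⊕ Jb`. -/
noncomputable def sCode (C₁ : Submodule F (J ⊕ K → F)) (C₂ : Submodule F (K ⊕ Jb → F)) :
    Submodule F (J ⊕ Jb → F) :=
  (starCode C₁ C₂ ⊓ vanishOn F (Set.range (fun k : K => (Sum.inr (Sum.inl k) : J ⊕ K ⊕ Jb)))).map
    (LinearMap.funLeft F F (Sum.elim Sum.inl (Sum.inr ∘ Sum.inr) : J ⊕ Jb → J ⊕ K ⊕ Jb))

/-!
Let `P = C₁|_K = C₂|_K`, a space of dimension `r`. Because the cross-sections of `C₁` and `C₂`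
on `K` vanish, restriction to `J` is injective on `C₁` and restriction to `Jb` is injective on
`C₂`. Hence `S = C₁ ⊕_r C₂` is isomorphic to the fibre product
`{(x, y) ∈ C₁ × C₂ | x|_K = y|_K}`, of dimension `dim C₁ + dim C₂ - r`, while
`S|_J = C₁|_J ≅ C₁` and `S|_Jb = C₂|_Jb ≅ C₂`, since every element of `P` lifts to both codes.
Finally `r = dim P ≤ dim C₁ = dim C₁|_J ≤ |J|`, and likewise for `Jb`.
-/

namespace Submodule

section Ring

variable {R M M' N : Type*} [Ring R] [AddCommGroup M] [Module R M] [AddCommGroup M']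
  [Module R M'] [AddCommGroup N] [Module R N]

def fiberProd (p : Submodule R M) (q : Submodule R M') (f : M →ₗ[R] N) (g : M' →ₗ[R] N) :
    Submodule R (M × M') :=
  p.prod q ⊓ LinearMap.ker (f ∘ₗ LinearMap.fst R M M' - g ∘ₗ LinearMap.snd R M M')

variable {p : Submodule R M} {q : Submodule R M'} {f : M →ₗ[R] N} {g : M' →ₗ[R] N}

theorem mem_fiberProd {z : M × M'} :
    z ∈ fiberProd p q f g ↔ z.1 ∈ p ∧ z.2 ∈ q ∧ f z.1 = g z.2 := by
  simp [fiberProd, sub_eq_zero, and_assoc]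

theorem map_fst_fiberProd (h : p.map f ≤ q.map g) :
    (fiberProd p q f g).map (LinearMap.fst R M M') = p := by
  refine le_antisymm (fun _ ⟨z, hz, hx⟩ => hx ▸ (mem_fiberProd.1 hz).1) fun x hx => ?_
  obtain ⟨y, hy, hxy⟩ := h (mem_map_of_mem hx)
  exact ⟨(x, y), mem_fiberProd.2 ⟨hx, hy, hxy.symm⟩, rfl⟩

theorem map_snd_fiberProd (h : q.map g ≤ p.map f) :
    (fiberProd p q f g).map (LinearMap.snd R M M') = q := by
  refine le_antisymm (fun _ ⟨z, hz, hy⟩ => hy ▸ (mem_fiberProd.1 hz).2.1) fun y hy => ?_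
  obtain ⟨x, hx, hxy⟩ := h (mem_map_of_mem hy)
  exact ⟨(x, y), mem_fiberProd.2 ⟨hx, hy, hxy⟩, rfl⟩

end Ring

variable {R M M' N : Type*} [DivisionRing R] [AddCommGroup M] [Module R M]
  [AddCommGroup M'] [Module R M'] [AddCommGroup N] [Module R N]

theorem finrank_map_add_finrank_inf_ker [FiniteDimensional R M] (s : Submodule R M)
    (f : M →ₗ[R] N) : finrank R (s.map f) + finrank R ↥(s ⊓ LinearMap.ker f) = finrank R s := by
  have h := (f.domRestrict s).finrank_range_add_finrank_ker
  rwa [LinearMap.range_domRestrict, LinearMap.ker_domRestrict,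
    ← finrank_map_subtype_eq, map_comap_subtype] at h

theorem finrank_map_eq_of_disjoint_ker [FiniteDimensional R M] {s : Submodule R M}
    {f : M →ₗ[R] N} (h : Disjoint s (LinearMap.ker f)) : finrank R (s.map f) = finrank R s := by
  have hrn := s.finrank_map_add_finrank_inf_ker f
  rwa [h.eq_bot, finrank_bot, add_zero] at hrn

theorem finrank_prod [FiniteDimensional R M] [FiniteDimensional R M'] (p : Submodule R M)
    (q : Submodule R M') : finrank R ↥(p.prod q) = finrank R p + finrank R q := by
  let e : ↥(p.prod q) ≃ₗ[R] p × q :=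
    { toFun := fun z => (⟨z.1.1, z.2.1⟩, ⟨z.1.2, z.2.2⟩)
      invFun := fun z => ⟨(z.1, z.2), z.1.2, z.2.2⟩
      map_add' := fun _ _ => rfl
      map_smul' := fun _ _ => rfl
      left_inv := fun _ => rfl
      right_inv := fun _ => rfl }
  rw [e.finrank_eq, Module.finrank_prod]

theorem finrank_fiberProd_add_finrank_map [FiniteDimensional R M] [FiniteDimensional R M']
    {p : Submodule R M} {q : Submodule R M'} {f : M →ₗ[R] N} {g : M' →ₗ[R] N}
    (h : p.map f = q.map g) :
    finrank R (fiberProd p q f g) + finrank R (p.map f) = finrank R p + finrank R q := by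
  set δ := f ∘ₗ LinearMap.fst R M M' - g ∘ₗ LinearMap.snd R M M'
  have hδ : (p.prod q).map δ = p.map f := by
    refine le_antisymm ?_ fun _ ⟨x, hx, hfx⟩ => ⟨(x, 0), ⟨hx, zero_mem q⟩, by simp [δ, hfx]⟩
    rintro _ ⟨z, ⟨hx, hy⟩, rfl⟩
    exact sub_mem (mem_map_of_mem hx) (h ▸ mem_map_of_mem hy)
  have hrn := (p.prod q).finrank_map_add_finrank_inf_ker δ
  rw [hδ, finrank_prod] at hrn
  rw [← hrn, add_comm]
  rfl

end Submodule

open LinearMap (funLeft)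

theorem disjoint_ker_funLeft_of_map_inf_vanishOn_eq_bot {α β γ : Type*}
    {i : α → γ} {j : β → γ} (hij : Set.range i ∪ Set.range j = Set.univ)
    {C : Submodule F (γ → F)} (h : (C ⊓ vanishOn F (Set.range i)).map (funLeft F F j) = ⊥) :
    Disjoint C (LinearMap.ker (funLeft F F i)) := by
  refine Submodule.disjoint_def.2 fun x hx hxi => ?_
  have hxj : funLeft F F j x = 0 := by
    rw [← Submodule.mem_bot F, ← h]
    exact Submodule.mem_map_of_mem ⟨hx, by rintro _ ⟨a, rfl⟩; exact congrFun hxi a⟩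
  funext c
  obtain ⟨a, rfl⟩ | ⟨b, rfl⟩ := hij.symm ▸ Set.mem_univ c
  exacts [congrFun hxi a, congrFun hxj b]

theorem disjoint_ker_funLeft_inl_of_crossK₁_eq_bot {C₁ : Submodule F (J ⊕ K → F)}
    (h : crossK₁ C₁ = ⊥) : Disjoint C₁ (LinearMap.ker (funLeft F F Sum.inl)) :=
  disjoint_ker_funLeft_of_map_inf_vanishOn_eq_bot Set.range_inl_union_range_inr h

theorem disjoint_ker_funLeft_inr_of_crossK₂_eq_bot {C₂ : Submodule F (K ⊕ Jb → F)}
    (h : crossK₂ C₂ = ⊥) : Disjoint C₂ (LinearMap.ker (funLeft F F Sum.inr)) :=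
  disjoint_ker_funLeft_of_map_inf_vanishOn_eq_bot Set.range_inr_union_range_inl h

variable (F J K Jb) in
noncomputable def outerRestrict : ((J ⊕ K → F) × (K ⊕ Jb → F)) →ₗ[F] (J ⊕ Jb → F) :=
  (LinearEquiv.sumArrowLequivProdArrow J Jb F F).symm.toLinearMap ∘ₗ
    (funLeft F F Sum.inl).prodMap (funLeft F F Sum.inr)

theorem funLeft_comp_starMap :
    funLeft F F (Sum.elim Sum.inl (Sum.inr ∘ Sum.inr) : J ⊕ Jb → J ⊕ K ⊕ Jb) ∘ₗ
      starMap F J K Jb = outerRestrict F J K Jb := by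
  ext p (j | j) <;> rfl

variable {C₁ : Submodule F (J ⊕ K → F)} {C₂ : Submodule F (K ⊕ Jb → F)}

theorem starCode_inf_vanishOn_eq_map_fiberProd :
    starCode C₁ C₂ ⊓ vanishOn F (Set.range fun k : K => (Sum.inr (Sum.inl k) : J ⊕ K ⊕ Jb)) =
      (C₁.fiberProd C₂ (funLeft F F Sum.inr) (funLeft F F Sum.inl)).map (starMap F J K Jb) := by
  ext w
  constructor
  · rintro ⟨⟨z, hz, rfl⟩, hw⟩
    refine ⟨z, Submodule.mem_fiberProd.2 ⟨hz.1, hz.2, funext fun k => ?_⟩, rfl⟩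
    exact sub_eq_zero.1 (hw _ ⟨k, rfl⟩)
  · rintro ⟨z, hz, rfl⟩
    obtain ⟨hx, hy, hxy⟩ := Submodule.mem_fiberProd.1 hz
    refine ⟨⟨z, ⟨hx, hy⟩, rfl⟩, ?_⟩
    rintro _ ⟨k, rfl⟩
    exact sub_eq_zero.2 (congrFun hxy k)

theorem sCode_eq_map_fiberProd :
    sCode C₁ C₂ = (C₁.fiberProd C₂ (funLeft F F Sum.inr) (funLeft F F Sum.inl)).map
      (outerRestrict F J K Jb) := by
  rw [sCode, starCode_inf_vanishOn_eq_map_fiberProd, ← Submodule.map_comp, funLeft_comp_starMap]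

theorem disjoint_fiberProd_ker_outerRestrict
    (h : Disjoint C₁ (LinearMap.ker (funLeft F F Sum.inl))) :
    Disjoint (C₁.fiberProd C₂ (funLeft F F Sum.inr) (funLeft F F Sum.inl))
      (LinearMap.ker (outerRestrict F J K Jb)) := by
  refine Submodule.disjoint_def.2 fun ⟨x, y⟩ hxy h0 => ?_
  obtain ⟨hx, -, hK⟩ := Submodule.mem_fiberProd.1 hxy
  have hx0 : x = 0 := Submodule.disjoint_def.1 h x hx (funext fun j => congrFun h0 (Sum.inl j))
  subst hx0
  refine Prod.ext rfl (funext ?_)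
  rintro (k | j)
  exacts [(congrFun hK k).symm, congrFun h0 (Sum.inr j)]

theorem sCode_map_funLeft_inl (hP : projK₁ C₁ = projK₂ C₂) :
    (sCode C₁ C₂).map (funLeft F F Sum.inl) = C₁.map (funLeft F F Sum.inl) := by
  have hcomp : funLeft F F Sum.inl ∘ₗ outerRestrict F J K Jb =
      funLeft F F Sum.inl ∘ₗ LinearMap.fst F _ _ := rfl
  rw [sCode_eq_map_fiberProd, ← Submodule.map_comp, hcomp, Submodule.map_comp,
    Submodule.map_fst_fiberProd hP.le]

theorem sCode_map_funLeft_inr (hP : projK₁ C₁ = projK₂ C₂) :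
    (sCode C₁ C₂).map (funLeft F F Sum.inr) = C₂.map (funLeft F F Sum.inr) := by
  have hcomp : funLeft F F Sum.inr ∘ₗ outerRestrict F J K Jb =
      funLeft F F Sum.inr ∘ₗ LinearMap.snd F _ _ := rfl
  rw [sCode_eq_map_fiberProd, ← Submodule.map_comp, hcomp, Submodule.map_comp,
    Submodule.map_snd_fiberProd hP.ge]

theorem finrank_sCode_add_finrank_projK₁ [Fintype J] [Fintype K] [Fintype Jb]
    (hP : projK₁ C₁ = projK₂ C₂) (hs₁ : crossK₁ C₁ = ⊥) :
    finrank F (sCode C₁ C₂) + finrank F (projK₁ C₁) = finrank F C₁ + finrank F C₂ := by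
  rw [sCode_eq_map_fiberProd, Submodule.finrank_map_eq_of_disjoint_ker
    (disjoint_fiberProd_ker_outerRestrict (disjoint_ker_funLeft_inl_of_crossK₁_eq_bot hs₁))]
  exact Submodule.finrank_fiberProd_add_finrank_map hP

theorem finrank_sCode_map_funLeft_inl [Fintype J] [Fintype K] (hP : projK₁ C₁ = projK₂ C₂)
    (hs₁ : crossK₁ C₁ = ⊥) :
    finrank F ((sCode C₁ C₂).map (funLeft F F Sum.inl)) = finrank F C₁ := by
  rw [sCode_map_funLeft_inl hP, Submodule.finrank_map_eq_of_disjoint_ker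
    (disjoint_ker_funLeft_inl_of_crossK₁_eq_bot hs₁)]

theorem finrank_sCode_map_funLeft_inr [Fintype K] [Fintype Jb] (hP : projK₁ C₁ = projK₂ C₂)
    (hs₂ : crossK₂ C₂ = ⊥) :
    finrank F ((sCode C₁ C₂).map (funLeft F F Sum.inr)) = finrank F C₂ := by
  rw [sCode_map_funLeft_inr hP, Submodule.finrank_map_eq_of_disjoint_ker
    (disjoint_ker_funLeft_inr_of_crossK₂_eq_bot hs₂)]

theorem rSum_state_dim [Fintype J] [Fintype K] [Fintype Jb]
    (r : ℕ)
    (D : Fin r → K → F)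
    (hDrows : LinearIndependent F D)
    (C₁ : Submodule F (J ⊕ K → F)) (C₂ : Submodule F (K ⊕ Jb → F))
    (hp₁ : projK₁ C₁ = Submodule.span F (Set.range D))
    (hp₂ : projK₂ C₂ = Submodule.span F (Set.range D))
    (hs₁ : crossK₁ C₁ = ⊥) (hs₂ : crossK₂ C₂ = ⊥) :
    finrank F ↥((sCode C₁ C₂).map (LinearMap.funLeft F F (Sum.inl : J → J ⊕ Jb))) +
        finrank F ↥((sCode C₁ C₂).map (LinearMap.funLeft F F (Sum.inr : Jb → J ⊕ Jb))) =
        finrank F ↥(sCode C₁ C₂) + r ∧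
      r ≤ Fintype.card J ∧ r ≤ Fintype.card Jb := by
  have hP : projK₁ C₁ = projK₂ C₂ := hp₁.trans hp₂.symm
  have hr : finrank F (projK₁ C₁) = r := by
    rw [hp₁, finrank_span_eq_card hDrows, Fintype.card_fin]
  have hrC₁ : r ≤ finrank F C₁ := hr ▸ Submodule.finrank_map_le _ _
  have hrC₂ : r ≤ finrank F C₂ := hr ▸ hP ▸ Submodule.finrank_map_le _ _
  have hJ := finrank_sCode_map_funLeft_inl (C₂ := C₂) hP hs₁
  have hJb := finrank_sCode_map_funLeft_inr hP hs₂
  have hS := finrank_sCode_add_finrank_projK₁ hP hs₁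
  have hcardJ := (Submodule.finrank_le ((sCode C₁ C₂).map (funLeft F F Sum.inl))).trans_eq
    (Module.finrank_fintype_fun_eq_card F)
  have hcardJb := (Submodule.finrank_le ((sCode C₁ C₂).map (funLeft F F Sum.inr))).trans_eq
    (Module.finrank_fintype_fun_eq_card F)
  refine ⟨by omega, by omega, by omega⟩
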